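/- arXiv:0804.0557 — 2 statements merged into one kernel-verified Lean document; each statement's English description precedes it below -/
import Mathlib

section
/- Let α₁, α₂ ∈ ℂ with 0 < |α₁| < 1 and 0 < |α₂| < 1, and let M = ℂ² \ {(0,0)} with the ℤ-action n · (z₁, z₂) = (α₁ⁿ z₁, α₂ⁿ z₂). The quotient topological space M/ℤ (with the quotient topology) is compact and Hausdorff. -/
/-- The orbit relation of the `ℤ`-action `n • (z₁, z₂) = (α₁ ^ n * z₁, α₂ ^ n * z₂)`
on `M = ℂ² \ {0}` (realized as the subtype of nonzero points of `ℂ × ℂ`). -/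
def hopfRel (α₁ α₂ : ℂ) (p q : {z : ℂ × ℂ // z ≠ 0}) : Prop :=
  ∃ n : ℤ, (α₁ ^ n * p.val.1, α₂ ^ n * p.val.2) = q.val

/-!
The contraction is multiplication by the unit `u = (α₁, α₂)` of the normed ring `ℂ × ℂ`, and
`‖u‖ < 1`. Iterating gives `‖u ^ k * z‖ ≤ ‖u‖ ^ k * ‖z‖`, so `u ^ n` maps a point of an annulus
`a ≤ ‖z‖ ≤ b` back into it only for the finitely many `n` with `a ≤ ‖u‖ ^ |n| * b`: the action
on the punctured ring is properly discontinuous, hence has a Hausdorff quotient. Every orbit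
meets the compact annulus `‖u⁻¹‖⁻¹ ≤ ‖z‖ ≤ 1` (at the least `n` with `‖u ^ n * z‖ ≤ 1`), so the
quotient is compact.
-/

open Set

namespace Hopf

variable {R : Type*} [NormedRing R] (u : Rˣ)

/-- `R \ {0}`, as a type synonym carrying `u` so that the action of `ℤ` by powers of `u` can be
an instance. -/
def Punctured (_u : Rˣ) : Type _ := {z : R // z ≠ 0}

instance : TopologicalSpace (Punctured u) :=
  inferInstanceAs (TopologicalSpace {z : R // z ≠ 0})

instance : T2Space (Punctured u) := inferInstanceAs (T2Space {z : R // z ≠ 0})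

instance [ProperSpace R] : LocallyCompactSpace (Punctured u) :=
  (isOpen_ne (x := (0 : R))).locallyCompactSpace

instance : VAdd ℤ (Punctured u) :=
  ⟨fun n z => ⟨(u ^ n : Rˣ) * z.1, (Units.mul_right_eq_zero _).not.2 z.2⟩⟩

variable {u}

@[simp] theorem val_vadd (n : ℤ) (z : Punctured u) : (n +ᵥ z).1 = (u ^ n : Rˣ) * z.1 := rfl

instance : AddAction ℤ (Punctured u) where
  zero_vadd z := Subtype.ext (by simp)
  add_vadd m n z := Subtype.ext (by simp [zpow_add, mul_assoc])

theorem orbitRel_iff {p q : Punctured u} :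
    AddAction.orbitRel ℤ (Punctured u) p q ↔ ∃ n : ℤ, ((u ^ n : Rˣ) : R) * p.1 = q.1 := by
  rw [AddAction.orbitRel_apply, AddAction.mem_orbit_symm]
  exact exists_congr fun n => Subtype.ext_iff

instance : ContinuousConstVAdd ℤ (Punctured u) :=
  ⟨fun _ => (continuous_const.mul continuous_subtype_val).subtype_mk _⟩

theorem norm_natCast_vadd_le (k : ℕ) (z : Punctured u) :
    ‖((k : ℤ) +ᵥ z).1‖ ≤ ‖(u : R)‖ ^ k * ‖z.1‖ := by
  induction k with
  | zero => simp
  | succ k ih =>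
    rw [Nat.cast_succ, add_comm, ← vadd_vadd, val_vadd, zpow_one, pow_succ', mul_assoc]
    exact norm_mul_le_of_le le_rfl ih

theorem norm_le_pow_mul_norm_neg_vadd (k : ℕ) (z : Punctured u) :
    ‖z.1‖ ≤ ‖(u : R)‖ ^ k * ‖(-(k : ℤ) +ᵥ z).1‖ := by
  simpa using norm_natCast_vadd_le k (-(k : ℤ) +ᵥ z)

theorem natAbs_lt_of_norm_mem_Icc (hu : ‖(u : R)‖ ≤ 1) {a b : ℝ} {N : ℕ}
    (hN : ‖(u : R)‖ ^ N * b < a) {n : ℤ} {z : Punctured u}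
    (hz : ‖z.1‖ ∈ Icc a b) (hnz : ‖(n +ᵥ z).1‖ ∈ Icc a b) : n.natAbs < N := by
  by_contra! hNn
  have hpow : ‖(u : R)‖ ^ n.natAbs * b ≤ ‖(u : R)‖ ^ N * b :=
    mul_le_mul_of_nonneg_right (pow_le_pow_of_le_one (norm_nonneg _) hu hNn)
      ((norm_nonneg _).trans hz.2)
  obtain ⟨k, rfl | rfl⟩ := Int.eq_nat_or_neg n
  · have := norm_natCast_vadd_le k z
    have := mul_le_mul_of_nonneg_left hz.2 (pow_nonneg (norm_nonneg (u : R)) k)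
    simp only [Int.natAbs_natCast] at hpow
    linarith [hnz.1]
  · have := norm_le_pow_mul_norm_neg_vadd k z
    have := mul_le_mul_of_nonneg_left hnz.2 (pow_nonneg (norm_nonneg (u : R)) k)
    simp only [Int.natAbs_neg, Int.natAbs_natCast] at hpow
    linarith [hz.1]

theorem exists_norm_mem_Icc_of_isCompact {K : Set (Punctured u)} (hK : IsCompact K) :
    ∃ a b : ℝ, 0 < a ∧ ∀ z ∈ K, ‖z.1‖ ∈ Icc a b := by
  have hf : Continuous fun z : Punctured u => ‖z.1‖ := continuous_subtype_val.norm
  obtain ⟨a, ha, hle⟩ := hK.exists_forall_le' hf.continuousOn fun z _ => norm_pos_iff.2 z.2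
  obtain ⟨b, hb⟩ := hK.bddAbove_image hf.continuousOn
  exact ⟨a, b, ha, fun z hz => ⟨hle z hz, hb ⟨z, hz, rfl⟩⟩⟩

theorem exists_pow_mul_lt (hu : ‖(u : R)‖ < 1) (b : ℝ) {a : ℝ} (ha : 0 < a) :
    ∃ N : ℕ, ‖(u : R)‖ ^ N * b < a := by
  have := (tendsto_pow_atTop_nhds_zero_of_lt_one (norm_nonneg _) hu).mul_const b
  rw [zero_mul] at this
  exact (this.eventually (gt_mem_nhds ha)).exists

theorem properlyDiscontinuousVAdd (hu : ‖(u : R)‖ < 1) :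
    ProperlyDiscontinuousVAdd ℤ (Punctured u) := by
  refine ⟨fun {K L} hK hL => ?_⟩
  obtain ⟨a, b, ha, hab⟩ := exists_norm_mem_Icc_of_isCompact (hK.union hL)
  obtain ⟨N, hN⟩ := exists_pow_mul_lt hu b ha
  refine (finite_Ioo (-(N : ℤ)) N).subset ?_
  rintro n ⟨_, ⟨z, hz, rfl⟩, hnz⟩
  have := natAbs_lt_of_norm_mem_Icc hu.le hN (hab z (.inl hz)) (hab _ (.inr hnz))
  simp only [mem_Ioo]
  omega

theorem t2Space_quotient [ProperSpace R] (hu : ‖(u : R)‖ < 1) :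
    T2Space (Quotient (AddAction.orbitRel ℤ (Punctured u))) :=
  have := properlyDiscontinuousVAdd hu
  inferInstance

theorem isCompact_setOf_norm_mem_Icc [ProperSpace R] {a : ℝ} (ha : 0 < a) (b : ℝ) :
    IsCompact {z : Punctured u | ‖z.1‖ ∈ Icc a b} := by
  have hK : IsCompact {z : R | ‖z‖ ∈ Icc a b} :=
    (isCompact_closedBall 0 b).of_isClosed_subset (isClosed_Icc.preimage continuous_norm)
      fun z hz => mem_closedBall_zero_iff.2 hz.2
  exact Topology.IsInducing.subtypeVal.isCompact_preimage' hK
    fun z hz => ⟨⟨z, norm_pos_iff.1 (ha.trans_le hz.1)⟩, rfl⟩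

variable [Nontrivial R]

theorem exists_vadd_norm_mem_Icc (hu : ‖(u : R)‖ < 1) (z : Punctured u) :
    ∃ n : ℤ, ‖(n +ᵥ z).1‖ ∈ Icc ‖(↑u⁻¹ : R)‖⁻¹ 1 := by
  have hz : 0 < ‖z.1‖ := norm_pos_iff.2 z.2
  have hex : ∃ n : ℤ, ‖(n +ᵥ z).1‖ ≤ 1 := by
    obtain ⟨k, hk⟩ := exists_pow_mul_lt hu ‖z.1‖ one_pos
    exact ⟨k, (norm_natCast_vadd_le k z).trans hk.le⟩
  have hbdd : ∃ b : ℤ, ∀ n : ℤ, ‖(n +ᵥ z).1‖ ≤ 1 → b ≤ n := by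
    obtain ⟨N, hN⟩ := exists_pow_mul_lt hu 1 hz
    refine ⟨-N, fun n hn => ?_⟩
    by_contra! hlt
    obtain ⟨k, rfl⟩ : ∃ k : ℕ, n = -k := ⟨n.natAbs, by omega⟩
    have := norm_le_pow_mul_norm_neg_vadd k z
    have := pow_le_pow_of_le_one (norm_nonneg _) hu.le (show N ≤ k by omega)
    nlinarith [pow_nonneg (norm_nonneg (u : R)) k]
  obtain ⟨n, hn, hleast⟩ := Int.exists_least_of_bdd hbdd hex
  refine ⟨n, ?_, hn⟩
  have hprev : 1 < ‖((n - 1) +ᵥ z).1‖ := not_le.1 fun h => by linarith [hleast _ h]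
  have hstep : ‖((n - 1) +ᵥ z).1‖ ≤ ‖(↑u⁻¹ : R)‖ * ‖(n +ᵥ z).1‖ := by
    rw [sub_eq_neg_add, ← vadd_vadd, val_vadd, zpow_neg_one]
    exact norm_mul_le _ _
  exact (inv_le_iff_one_le_mul₀' (norm_pos_iff.2 u⁻¹.ne_zero)).2 (hprev.le.trans hstep)

theorem compactSpace_quotient [ProperSpace R] (hu : ‖(u : R)‖ < 1) :
    CompactSpace (Quotient (AddAction.orbitRel ℤ (Punctured u))) := by
  have hK := isCompact_setOf_norm_mem_Icc (u := u) (inv_pos.2 (norm_pos_iff.2 u⁻¹.ne_zero)) 1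
  refine ⟨(hK.image continuous_quotient_mk').of_isClosed_subset isClosed_univ fun q _ => ?_⟩
  obtain ⟨z, rfl⟩ := Quotient.exists_rep q
  obtain ⟨n, hn⟩ := exists_vadd_norm_mem_Icc hu z
  exact ⟨n +ᵥ z, hn, Quotient.sound (AddAction.mem_orbit z n)⟩

end Hopf

open Hopf

/-- For `0 < |α₁| < 1` and `0 < |α₂| < 1`, the quotient topological
space `M/ℤ` (with the quotient topology) is compact and Hausdorff. -/
theorem hopf_quotient_compact_t2
    (α₁ α₂ : ℂ)
    (h₁ : 0 < ‖α₁‖) (h₁' : ‖α₁‖ < 1)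
    (h₂ : 0 < ‖α₂‖) (h₂' : ‖α₂‖ < 1) :
    CompactSpace (Quot (hopfRel α₁ α₂)) ∧ T2Space (Quot (hopfRel α₁ α₂)) := by
  set u : (ℂ × ℂ)ˣ := MulEquiv.prodUnits.symm
    (Units.mk0 α₁ (norm_pos_iff.1 h₁), Units.mk0 α₂ (norm_pos_iff.1 h₂))
  have hu : ‖(u : ℂ × ℂ)‖ < 1 := max_lt h₁' h₂'
  have hrel : hopfRel α₁ α₂ = (AddAction.orbitRel ℤ (Punctured u)).r := by
    funext p q
    refine propext (orbitRel_iff.trans (exists_congr fun n => ?_)).symm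
    rw [Units.val_zpow_eq_zpow_val]
    rfl
  rw [hrel]
  exact ⟨compactSpace_quotient hu, t2Space_quotient hu⟩
end

section
/- Let α₁, α₂ ∈ ℂ with 0 < |α₁| < 1 and 0 < |α₂| < 1, and let M = ℂ² \ {(0,0)} with the ℤ-action n · (z₁, z₂) = (α₁ⁿ z₁, α₂ⁿ z₂). The quotient topological space M/ℤ is homeomorphic to S¹ × S³, where S¹ is the unit circle in ℂ and S³ is the unit sphere in ℂ². -/
open Complex Metric Set Filter Topology Real

section CircleQuotient

variable {X Y : Type*} [TopologicalSpace X] [TopologicalSpace Y] {r : X → X → Prop}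

lemma compactSpace_quot_of_homeomorph_real_prod [CompactSpace Y] (e : X ≃ₜ ℝ × Y)
    (hr : ∀ x y, r x y ↔ ∃ n : ℤ, e y = ((e x).1 - n, (e x).2)) : CompactSpace (Quot r) := by
  let f : Icc (0 : ℝ) 1 × Y → Quot r := fun p ↦ Quot.mk r (e.symm (p.1, p.2))
  refine Function.Surjective.compactSpace (f := f) (by fun_prop) (Quot.ind fun x ↦ ?_)
  refine ⟨(⟨Int.fract (e x).1, Int.fract_nonneg _, (Int.fract_lt_one _).le⟩, (e x).2), ?_⟩
  refine Quot.sound ((hr _ _).2 ⟨-⌊(e x).1⌋, ?_⟩)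
  simp

noncomputable def expCircle (t : ℝ) : sphere (0 : ℂ) 1 :=
  ⟨Circle.exp (2 * π * t), mem_sphere_zero_iff_norm.2 (Circle.norm_coe _)⟩

@[fun_prop]
lemma continuous_expCircle : Continuous expCircle := by
  unfold expCircle; fun_prop

lemma expCircle_surjective : Function.Surjective expCircle := by
  intro u
  obtain ⟨t, ht⟩ := Circle.exp_surjective ⟨u, u.2⟩
  refine ⟨t / (2 * π), Subtype.ext ?_⟩
  simp only [expCircle, mul_div_cancel₀ t (by positivity : 2 * π ≠ 0), ht]

lemma expCircle_eq_expCircle_iff {s t : ℝ} :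
    expCircle s = expCircle t ↔ ∃ n : ℤ, t = s - n := by
  rw [expCircle, expCircle, Subtype.mk.injEq, Circle.coe_inj, Circle.exp_eq_exp]
  refine exists_congr fun n ↦ ?_
  constructor <;> intro h <;> nlinarith [pi_pos]

theorem nonempty_quot_homeomorph_sphere_prod [CompactSpace Y] [T2Space Y] (e : X ≃ₜ ℝ × Y)
    (hr : ∀ x y, r x y ↔ ∃ n : ℤ, e y = ((e x).1 - n, (e x).2)) :
    Nonempty (Quot r ≃ₜ sphere (0 : ℂ) 1 × Y) := by
  let f : X → sphere (0 : ℂ) 1 × Y := fun x ↦ (expCircle (e x).1, (e x).2)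
  have hf : ∀ x y, f x = f y ↔ r x y := fun x y ↦ by
    simp only [f, hr, Prod.ext_iff, expCircle_eq_expCircle_iff, eq_comm (a := (e x).2),
      exists_and_right]
  let F : Quot r → sphere (0 : ℂ) 1 × Y := Quot.lift f fun x y h ↦ (hf x y).2 h
  have hF : Function.Bijective F := by
    refine ⟨fun a b ↦ Quot.induction_on₂ a b fun x y h ↦ Quot.sound ((hf x y).1 h),
      fun ⟨u, y⟩ ↦ ?_⟩
    obtain ⟨t, rfl⟩ := expCircle_surjective u
    exact ⟨Quot.mk r (e.symm (t, y)), by simp [F, f]⟩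
  have := compactSpace_quot_of_homeomorph_real_prod e hr
  exact ⟨(continuous_quot_lift _ (by fun_prop)).homeoOfEquivCompactToT2 (f := .ofBijective F hF)⟩

end CircleQuotient

lemma continuous_of_strictAnti_of_apply_eq {X : Type*} [TopologicalSpace X] {f : X → ℝ → ℝ}
    {τ : X → ℝ} {c : ℝ} (hf : ∀ t, Continuous fun x ↦ f x t) (hanti : ∀ x, StrictAnti (f x))
    (hτ : ∀ x, f x (τ x) = c) : Continuous τ := by
  refine continuous_iff_continuousAt.2 fun x₀ ↦ tendsto_order.2 ⟨fun a ha ↦ ?_, fun b hb ↦ ?_⟩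
  · have hc : c < f x₀ a := hτ x₀ ▸ hanti x₀ ha
    filter_upwards [(hf a).continuousAt.eventually_const_lt hc] with x hx
    exact (hanti x).lt_iff_gt.1 (hτ x ▸ hx)
  · have hc : f x₀ b < c := hτ x₀ ▸ hanti x₀ hb
    filter_upwards [(hf b).continuousAt.eventually_lt_const hc] with x hx
    exact (hanti x).lt_iff_gt.1 (hτ x ▸ hx)

section NormCpow

variable {a : ℂ}

lemma antitone_norm_cpow_mul (ha : ‖a‖ ∈ Ioo 0 1) (c : ℂ) :
    Antitone fun t : ℝ ↦ ‖a ^ (t : ℂ) * c‖ := by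
  intro s t hst
  simp only [norm_mul, norm_cpow_real]
  exact mul_le_mul_of_nonneg_right (antitone_rpow_of_base_le_one ha.1 ha.2.le hst) (norm_nonneg c)

lemma strictAnti_norm_cpow_mul (ha : ‖a‖ ∈ Ioo 0 1) {c : ℂ} (hc : c ≠ 0) :
    StrictAnti fun t : ℝ ↦ ‖a ^ (t : ℂ) * c‖ := by
  intro s t hst
  simp only [norm_mul, norm_cpow_real]
  exact mul_lt_mul_of_pos_right (strictAnti_rpow_of_base_lt_one ha.1 ha.2 hst) (norm_pos_iff.2 hc)

lemma tendsto_cpow_mul_atTop (ha : ‖a‖ < 1) (c : ℂ) :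
    Tendsto (fun t : ℝ ↦ a ^ (t : ℂ) * c) atTop (𝓝 0) := by
  rw [tendsto_zero_iff_norm_tendsto_zero]
  simpa [norm_cpow_real] using
    (tendsto_rpow_atTop_of_base_lt_one _ (by linarith [norm_nonneg a]) ha).mul_const ‖c‖

lemma tendsto_norm_cpow_mul_atBot (ha : ‖a‖ ∈ Ioo 0 1) {c : ℂ} (hc : c ≠ 0) :
    Tendsto (fun t : ℝ ↦ ‖a ^ (t : ℂ) * c‖) atBot atTop := by
  simpa [norm_cpow_real] using
    (tendsto_rpow_atBot_of_base_lt_one _ ha.1 ha.2).atTop_mul_const (norm_pos_iff.2 hc)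

end NormCpow

section DiagonalFlow

variable {ι : Type*}

/-- `α i ^ (t : ℂ)` is the principal power `exp (t log (α i))`; at integer times it is the
`zpow` of the `ℤ`-action. -/
noncomputable def diagFlow (α : ι → ℂ) (t : ℝ) (v : EuclideanSpace ℂ ι) : EuclideanSpace ℂ ι :=
  WithLp.toLp 2 fun i ↦ α i ^ (t : ℂ) * v i

variable {α : ι → ℂ}

@[simp]
lemma diagFlow_apply (t : ℝ) (v : EuclideanSpace ℂ ι) (i : ι) :
    diagFlow α t v i = α i ^ (t : ℂ) * v i := rfl

@[simp]
lemma diagFlow_zero (v : EuclideanSpace ℂ ι) : diagFlow α 0 v = v := by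
  ext i; simp

lemma diagFlow_diagFlow (hα : ∀ i, α i ≠ 0) (s t : ℝ) (v : EuclideanSpace ℂ ι) :
    diagFlow α s (diagFlow α t v) = diagFlow α (s + t) v := by
  ext i; simp [cpow_add _ _ (hα i), mul_assoc]

lemma diagFlow_ne_zero (hα : ∀ i, α i ≠ 0) (t : ℝ) {v : EuclideanSpace ℂ ι} (hv : v ≠ 0) :
    diagFlow α t v ≠ 0 := by
  obtain ⟨i, hi⟩ : ∃ i, v i ≠ 0 := by simpa [PiLp.ext_iff] using hv
  simpa [PiLp.ext_iff, hα] using ⟨i, hi⟩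

lemma continuous_diagFlow (hα : ∀ i, α i ≠ 0) :
    Continuous fun p : ℝ × EuclideanSpace ℂ ι ↦ diagFlow α p.1 p.2 := by
  refine (PiLp.continuous_toLp 2 _).comp (continuous_pi fun i ↦ ?_)
  exact (continuous_ofReal.comp continuous_fst).const_cpow (.inl (hα i)) |>.mul (by fun_prop)

variable [Fintype ι]

lemma strictAnti_norm_diagFlow (hα : ∀ i, ‖α i‖ ∈ Ioo 0 1) {v : EuclideanSpace ℂ ι}
    (hv : v ≠ 0) : StrictAnti fun t ↦ ‖diagFlow α t v‖ := by
  obtain ⟨j, hj⟩ : ∃ j, v j ≠ 0 := by simpa [PiLp.ext_iff] using hv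
  intro s t hst
  rw [← sq_lt_sq₀ (norm_nonneg _) (norm_nonneg _), EuclideanSpace.norm_sq_eq,
    EuclideanSpace.norm_sq_eq]
  refine Finset.sum_lt_sum (fun i _ ↦ ?_) ⟨j, Finset.mem_univ j, ?_⟩
  · exact pow_le_pow_left₀ (norm_nonneg _) (antitone_norm_cpow_mul (hα i) (v i) hst.le) 2
  · exact pow_lt_pow_left₀ (strictAnti_norm_cpow_mul (hα j) hj hst) (norm_nonneg _) two_ne_zero

lemma exists_norm_diagFlow_eq_one (hα : ∀ i, ‖α i‖ ∈ Ioo 0 1) {v : EuclideanSpace ℂ ι}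
    (hv : v ≠ 0) : ∃ t, ‖diagFlow α t v‖ = 1 := by
  obtain ⟨j, hj⟩ : ∃ j, v j ≠ 0 := by simpa [PiLp.ext_iff] using hv
  have hα₀ : ∀ i, α i ≠ 0 := fun i ↦ norm_pos_iff.1 (hα i).1
  have hcont : Continuous fun t ↦ ‖diagFlow α t v‖ :=
    ((continuous_diagFlow hα₀).comp (continuous_id.prodMk continuous_const)).norm
  have htop : Tendsto (fun t ↦ diagFlow α t v) atTop (𝓝 0) := by
    have := ((PiLp.continuous_toLp 2 _).tendsto 0).comp
      (tendsto_pi_nhds.2 fun i ↦ tendsto_cpow_mul_atTop (hα i).2 (v i))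
    rwa [WithLp.toLp_zero] at this
  have hsmall : ∃ t, ‖diagFlow α t v‖ ≤ 1 := by
    have := htop.norm
    rw [norm_zero] at this
    exact (this.eventually_le_const one_pos).exists
  have hbot : Tendsto (fun t ↦ ‖diagFlow α t v‖) atBot atTop :=
    tendsto_atTop_mono (fun t ↦ PiLp.norm_apply_le _ j) (tendsto_norm_cpow_mul_atBot (hα j) hj)
  exact mem_range_of_exists_le_of_exists_ge hcont hsmall (hbot.eventually_ge_atTop 1).exists

noncomputable def sphereTime (α : ι → ℂ) (v : EuclideanSpace ℂ ι) : ℝ :=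
  Classical.epsilon fun t ↦ ‖diagFlow α t v‖ = 1

lemma norm_diagFlow_eq_one_iff (hα : ∀ i, ‖α i‖ ∈ Ioo 0 1) {v : EuclideanSpace ℂ ι}
    (hv : v ≠ 0) {t : ℝ} : ‖diagFlow α t v‖ = 1 ↔ t = sphereTime α v := by
  have hspec := Classical.epsilon_spec (exists_norm_diagFlow_eq_one hα hv)
  refine ⟨fun ht ↦ (strictAnti_norm_diagFlow hα hv).injective (ht.trans hspec.symm), ?_⟩
  rintro rfl
  exact hspec

lemma continuous_sphereTime (hα : ∀ i, ‖α i‖ ∈ Ioo 0 1) :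
    Continuous fun v : {v : EuclideanSpace ℂ ι // v ≠ 0} ↦ sphereTime α v :=
  have hα₀ : ∀ i, α i ≠ 0 := fun i ↦ norm_pos_iff.1 (hα i).1
  continuous_of_strictAnti_of_apply_eq (c := 1)
    (fun _ ↦ ((continuous_diagFlow hα₀).comp (continuous_const.prodMk continuous_subtype_val)).norm)
    (fun v ↦ strictAnti_norm_diagFlow hα v.2)
    (fun v ↦ (norm_diagFlow_eq_one_iff hα v.2).2 rfl)

noncomputable def diagFlowHomeomorph (hα : ∀ i, ‖α i‖ ∈ Ioo 0 1) :
    {v : EuclideanSpace ℂ ι // v ≠ 0} ≃ₜ ℝ × sphere (0 : EuclideanSpace ℂ ι) 1 :=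
  have hα₀ : ∀ i, α i ≠ 0 := fun i ↦ norm_pos_iff.1 (hα i).1
  { toFun v := (sphereTime α v, ⟨diagFlow α (sphereTime α v) v,
      mem_sphere_zero_iff_norm.2 ((norm_diagFlow_eq_one_iff hα v.2).2 rfl)⟩)
    invFun p := ⟨diagFlow α (-p.1) p.2, diagFlow_ne_zero hα₀ _ (ne_zero_of_mem_unit_sphere p.2)⟩
    left_inv v := Subtype.ext (by
      change diagFlow α _ (diagFlow α _ _) = _
      rw [diagFlow_diagFlow hα₀, neg_add_cancel, diagFlow_zero])
    right_inv := by
      rintro ⟨t, s⟩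
      have hflow : diagFlow α t (diagFlow α (-t) s) = s := by
        rw [diagFlow_diagFlow hα₀, add_neg_cancel, diagFlow_zero]
      have htime : sphereTime α (diagFlow α (-t) s) = t :=
        ((norm_diagFlow_eq_one_iff hα (diagFlow_ne_zero hα₀ _ (ne_zero_of_mem_unit_sphere s))).1
          (by rw [hflow]; exact norm_eq_of_mem_sphere s)).symm
      ext1
      · exact htime
      · exact Subtype.ext (by simp only [htime, hflow])
    continuous_toFun := by
      have hτ := continuous_sphereTime hα
      exact hτ.prodMk
        (((continuous_diagFlow hα₀).comp (hτ.prodMk continuous_subtype_val)).subtype_mk _)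
    continuous_invFun :=
      ((continuous_diagFlow hα₀).comp (continuous_fst.neg.prodMk
        (continuous_subtype_val.comp continuous_snd))).subtype_mk _ }

lemma diagFlowHomeomorph_eq_iff (hα : ∀ i, ‖α i‖ ∈ Ioo 0 1)
    (v w : {v : EuclideanSpace ℂ ι // v ≠ 0}) (n : ℤ) :
    diagFlowHomeomorph hα w = ((diagFlowHomeomorph hα v).1 - n, (diagFlowHomeomorph hα v).2) ↔
      w.1 = diagFlow α n v := by
  have hα₀ : ∀ i, α i ≠ 0 := fun i ↦ norm_pos_iff.1 (hα i).1
  rw [← Homeomorph.eq_symm_apply, Subtype.ext_iff]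
  simp [diagFlowHomeomorph, diagFlow_diagFlow hα₀]

end DiagonalFlow

noncomputable def euclideanOfProd : (ℂ × ℂ) ≃L[ℂ] EuclideanSpace ℂ (Fin 2) :=
  (ContinuousLinearEquiv.finTwoArrow ℂ ℂ).symm.trans (EuclideanSpace.equiv (Fin 2) ℂ).symm

noncomputable def puncturedEuclideanOfProd :
    {z : ℂ × ℂ // z ≠ 0} ≃ₜ {v : EuclideanSpace ℂ (Fin 2) // v ≠ 0} :=
  euclideanOfProd.toHomeomorph.subtype fun _ ↦ (map_ne_zero_iff _ euclideanOfProd.injective).symm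

lemma hopfRel_iff (α₁ α₂ : ℂ) (z w : {z : ℂ × ℂ // z ≠ 0}) :
    hopfRel α₁ α₂ z w ↔ ∃ n : ℤ,
      (puncturedEuclideanOfProd w).1 = diagFlow ![α₁, α₂] n (puncturedEuclideanOfProd z) := by
  refine exists_congr fun n ↦ ?_
  rw [eq_comm, ← euclideanOfProd.injective.eq_iff]
  simp [puncturedEuclideanOfProd, PiLp.ext_iff, Fin.forall_fin_two, euclideanOfProd]

/-- For `0 < |α₁| < 1` and `0 < |α₂| < 1`, the quotient topological
space `M/ℤ` is homeomorphic to `S¹ × S³`, where `S¹` is the unit circle in `ℂ`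
and `S³` is the unit sphere in `ℂ²`. -/
theorem hopf_quotient_homeomorph_s1_s3
    (α₁ α₂ : ℂ)
    (h₁ : 0 < ‖α₁‖) (h₁' : ‖α₁‖ < 1)
    (h₂ : 0 < ‖α₂‖) (h₂' : ‖α₂‖ < 1) :
    Nonempty (Quot (hopfRel α₁ α₂) ≃ₜ
      (Metric.sphere (0 : ℂ) 1 × Metric.sphere (0 : EuclideanSpace ℂ (Fin 2)) 1)) := by
  have hα : ∀ i, ‖![α₁, α₂] i‖ ∈ Ioo 0 1 := Fin.forall_fin_two.2 ⟨⟨h₁, h₁'⟩, ⟨h₂, h₂'⟩⟩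
  refine nonempty_quot_homeomorph_sphere_prod
    (puncturedEuclideanOfProd.trans (diagFlowHomeomorph hα)) fun z w ↦ ?_
  simp only [Homeomorph.trans_apply, diagFlowHomeomorph_eq_iff, hopfRel_iff]
end
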